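/- arXiv:2111.08706 — 8 statements merged into one kernel-verified Lean document; each statement's English description precedes it below -/
import Mathlib

section
/- Suppose Z : ℝ → Mat(n,r) is differentiable and satisfies dZ/dt = (Y − Z(ZᵀZ)⁻¹ZᵀY)Cᵀ for a fixed r×m matrix C, with Z(0) of full column rank. Then d(ZᵀZ)/dt = 0 along the flow, i.e., Z(t)ᵀZ(t) = Z(0)ᵀZ(0) for all t where the flow is defined. -/
open Matrix Filter Topology

/-!
Since `Zᵀ(Y − Ŷ) = 0`, the derivative `Z'ᵀZ + ZᵀZ'` of the Gram matrix `ZᵀZ` vanishes wherever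
`ZᵀZ` is invertible. Invertibility is only known at `t = 0`, so we argue by connectedness: the
level set `{t | Z(t)ᵀZ(t) = Z(0)ᵀZ(0)}` is closed by continuity, and open because near each of its
points `ZᵀZ` stays invertible, hence has zero derivative, hence is constant.
-/

theorem Continuous.apply_eq_of_eventually_eq_on_fiber {X Y : Type*} [TopologicalSpace X]
    [PreconnectedSpace X] [TopologicalSpace Y] [T2Space Y] {f : X → Y} (hf : Continuous f)
    {x₀ : X} (h : ∀ x, f x = f x₀ → ∀ᶠ y in 𝓝 x, f y = f x) (x : X) : f x = f x₀ := by
  have hclosed : IsClosed {x | f x = f x₀} := isClosed_eq hf continuous_const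
  have hopen : IsOpen {x | f x = f x₀} := isOpen_iff_mem_nhds.2 fun x hx =>
    (h x hx).mono fun y hy => hy.trans hx
  exact Set.eq_univ_iff_forall.1 (IsClopen.eq_univ ⟨hclosed, hopen⟩ ⟨x₀, rfl⟩) x

theorem eventually_eq_of_eventually_hasDerivAt_zero {E : Type*} [NormedAddCommGroup E]
    [NormedSpace ℝ E] {f : ℝ → E} {t₀ : ℝ} (h : ∀ᶠ t in 𝓝 t₀, HasDerivAt f 0 t) :
    ∀ᶠ t in 𝓝 t₀, f t = f t₀ := by
  obtain ⟨ε, hε, hball⟩ := Metric.eventually_nhds_iff_ball.1 h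
  filter_upwards [Metric.ball_mem_nhds t₀ hε] with t ht
  exact Metric.isOpen_ball.is_const_of_deriv_eq_zero (convex_ball t₀ ε).isPreconnected
    (fun u hu => (hball u hu).differentiableAt.differentiableWithinAt)
    (fun u hu => (hball u hu).deriv) ht (Metric.mem_ball_self hε)

theorem transpose_mul_sub_projection_eq_zero {R n r m : Type*} [Fintype n] [Fintype r]
    [DecidableEq r] [CommRing R] (Z : Matrix n r R) (Y : Matrix n m R)
    (hZ : IsUnit (Zᵀ * Z)) : Zᵀ * (Y - Z * (Zᵀ * Z)⁻¹ * Zᵀ * Y) = 0 := by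
  have hinv : Zᵀ * Z * (Zᵀ * Z)⁻¹ = 1 :=
    mul_nonsing_inv _ ((isUnit_iff_isUnit_det _).1 hZ)
  calc Zᵀ * (Y - Z * (Zᵀ * Z)⁻¹ * Zᵀ * Y)
      = Zᵀ * Y - Zᵀ * Z * (Zᵀ * Z)⁻¹ * (Zᵀ * Y) := by simp only [Matrix.mul_sub, Matrix.mul_assoc]
    _ = 0 := by rw [hinv, Matrix.one_mul, sub_self]

theorem hasDerivAt_transpose_mul_self_apply {n r : Type*} [Fintype n] {Z : ℝ → Matrix n r ℝ}
    {Z' : Matrix n r ℝ} {t : ℝ} (h : ∀ i j, HasDerivAt (fun s => Z s i j) (Z' i j) t) (i j : r) :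
    HasDerivAt (fun s => ((Z s)ᵀ * Z s) i j) ((Z'ᵀ * Z t + (Z t)ᵀ * Z') i j) t := by
  simp only [Matrix.add_apply, mul_apply, transpose_apply, ← Finset.sum_add_distrib]
  exact HasDerivAt.fun_sum fun k _ => (h k i).mul (h k j)

theorem hasDerivAt_transpose_mul_self_apply_zero {n r : Type*} [Fintype n]
    {Z : ℝ → Matrix n r ℝ} {Z' : Matrix n r ℝ} {t : ℝ}
    (h : ∀ i j, HasDerivAt (fun s => Z s i j) (Z' i j) t) (hZZ' : (Z t)ᵀ * Z' = 0) (i j : r) :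
    HasDerivAt (fun s => ((Z s)ᵀ * Z s) i j) 0 t := by
  have hZ'Z : Z'ᵀ * Z t = 0 := by
    rw [← transpose_transpose (Z'ᵀ * Z t), transpose_mul, transpose_transpose, hZZ',
      transpose_zero]
  simpa only [hZ'Z, hZZ', add_zero, Matrix.zero_apply] using
    hasDerivAt_transpose_mul_self_apply h i j

theorem Continuous.eventually_eq_of_hasDerivAt_apply_zero {r : Type*} [Fintype r]
    [DecidableEq r] {W : ℝ → Matrix r r ℝ}
    (hW : Continuous W) (hW' : ∀ t, IsUnit (W t) → ∀ i j, HasDerivAt (fun s => W s i j) 0 t)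
    {t₀ : ℝ} (h : IsUnit (W t₀)) : ∀ᶠ t in 𝓝 t₀, W t = W t₀ := by
  have hdet : (W t₀).det ≠ 0 := ((isUnit_iff_isUnit_det _).1 h).ne_zero
  have hunit : ∀ᶠ t in 𝓝 t₀, IsUnit (W t) :=
    (hW.matrix_det.continuousAt.eventually_ne hdet).mono fun t ht =>
      (isUnit_iff_isUnit_det _).2 (Ne.isUnit ht)
  have hentry : ∀ i j, ∀ᶠ t in 𝓝 t₀, W t i j = W t₀ i j := fun i j =>
    eventually_eq_of_eventually_hasDerivAt_zero (hunit.mono fun t ht => hW' t ht i j)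
  filter_upwards [eventually_all.2 fun i => eventually_all.2 (hentry i)] with t ht
  exact Matrix.ext ht

/-- Along the FA* flow `dZ/dt = (Y − Z(ZᵀZ)⁻¹ZᵀY)Cᵀ` with `Z(0)` of
full column rank, `ZᵀZ` is constant: `Z(t)ᵀZ(t) = Z(0)ᵀZ(0)` for all `t`. -/
theorem stmt2 (n m r : ℕ)
    (Y : Matrix (Fin n) (Fin m) ℝ) (C : Matrix (Fin r) (Fin m) ℝ)
    (Z : ℝ → Matrix (Fin n) (Fin r) ℝ)
    (hZ0 : IsUnit ((Z 0)ᵀ * Z 0))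
    (hdyn : ∀ t : ℝ, ∀ i j, HasDerivAt (fun s => Z s i j)
      (((Y - Z t * ((Z t)ᵀ * Z t)⁻¹ * (Z t)ᵀ * Y) * Cᵀ) i j) t) :
    ∀ t : ℝ, (Z t)ᵀ * Z t = (Z 0)ᵀ * Z 0 := by
  have hW : Continuous fun t => (Z t)ᵀ * Z t :=
    continuous_matrix fun i j => continuous_iff_continuousAt.2 fun t =>
      (hasDerivAt_transpose_mul_self_apply (hdyn t) i j).continuousAt
  have hW' : ∀ t, IsUnit ((Z t)ᵀ * Z t) → ∀ i j, HasDerivAt (fun s => ((Z s)ᵀ * Z s) i j) 0 t :=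
    fun t ht => hasDerivAt_transpose_mul_self_apply_zero (hdyn t) <| by
      rw [← Matrix.mul_assoc, transpose_mul_sub_projection_eq_zero _ _ ht, Matrix.zero_mul]
  refine hW.apply_eq_of_eventually_eq_on_fiber fun t₀ ht₀ =>
    hW.eventually_eq_of_hasDerivAt_apply_zero hW' ?_
  rw [ht₀]
  exact hZ0
end

section
/- Under FA* dynamics dZ/dt = (Y − Ŷ)Cᵀ with W = (ZᵀZ)⁻¹ZᵀY and Ŷ = ZW, the alignment matrix A = (ZᵀZ)⁻¹CWᵀ + WCᵀ(ZᵀZ)⁻¹ satisfies dA/dt = 2(ZᵀZ)⁻¹RᵀR(ZᵀZ)⁻¹, where R = (Y − Ŷ)Cᵀ. -/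
/-! The normal equations give `Zᵀ(Y − ZW) = 0`, hence `ZᵀR = 0`, so
`d(ZᵀZ)/dt = RᵀZ + ZᵀR = 0` and `G = ZᵀZ` is constant along the flow. With `G` frozen,
`A = B + Bᵀ` for `B = G⁻¹CYᵀZG⁻¹`, which is linear in `Z`; so `dA/dt` is
`G⁻¹CYᵀRG⁻¹` plus its transpose, and `CYᵀR = RᵀR` because the residual `E = Y − ZW`
satisfies `EᵀE = YᵀE`. -/

open Matrix

section Calculus

variable {𝕜 : Type*} [NontriviallyNormedField 𝕜] {l m n : Type*}

def HasMatrixDerivAt (M : 𝕜 → Matrix m n 𝕜) (M' : Matrix m n 𝕜) (t : 𝕜) : Prop :=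
  ∀ i j, HasDerivAt (fun s => M s i j) (M' i j) t

namespace HasMatrixDerivAt

variable {M N : 𝕜 → Matrix m n 𝕜} {M' N' : Matrix m n 𝕜} {t : 𝕜}

theorem const (M : Matrix m n 𝕜) (t : 𝕜) : HasMatrixDerivAt (fun _ => M) 0 t :=
  fun _ _ => hasDerivAt_const t _

theorem add (hM : HasMatrixDerivAt M M' t) (hN : HasMatrixDerivAt N N' t) :
    HasMatrixDerivAt (fun s => M s + N s) (M' + N') t :=
  fun i j => (hM i j).add (hN i j)

theorem transpose (hM : HasMatrixDerivAt M M' t) :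
    HasMatrixDerivAt (fun s => (M s)ᵀ) M'ᵀ t :=
  fun i j => hM j i

theorem mul [Fintype n] {N : 𝕜 → Matrix n l 𝕜} {N' : Matrix n l 𝕜}
    (hM : HasMatrixDerivAt M M' t) (hN : HasMatrixDerivAt N N' t) :
    HasMatrixDerivAt (fun s => M s * N s) (M' * N t + M t * N') t := by
  intro i j
  simpa only [Matrix.add_apply, mul_apply, Finset.sum_add_distrib] using
    HasDerivAt.fun_sum (u := Finset.univ) fun k _ => (hM i k).fun_mul (hN k j)

theorem const_mul_mul [Fintype m] [Fintype n] (P : Matrix l m 𝕜) (Q : Matrix n l 𝕜)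
    (hM : HasMatrixDerivAt M M' t) :
    HasMatrixDerivAt (fun s => P * M s * Q) (P * M' * Q) t := by
  simpa using ((const P t).mul hM).mul (const Q t)

end HasMatrixDerivAt

end Calculus

theorem eq_of_forall_hasMatrixDerivAt_zero {𝕜 m n : Type*} [RCLike 𝕜] {M : 𝕜 → Matrix m n 𝕜}
    (hM : ∀ t, HasMatrixDerivAt M 0 t) (s t : 𝕜) : M s = M t := by
  ext i j
  exact is_const_of_deriv_eq_zero (fun u => (hM u i j).differentiableAt)
    (fun u => (hM u i j).deriv) s t

theorem transpose_mul_self_eq_of_hasMatrixDerivAt {𝕜 k n : Type*} [RCLike 𝕜] [Fintype n]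
    {Z R : 𝕜 → Matrix n k 𝕜} (hZ : ∀ t, HasMatrixDerivAt Z (R t) t)
    (hZR : ∀ t, (Z t)ᵀ * R t = 0) (s t : 𝕜) : (Z s)ᵀ * Z s = (Z t)ᵀ * Z t := by
  refine eq_of_forall_hasMatrixDerivAt_zero (M := fun u => (Z u)ᵀ * Z u) (fun u => ?_) s t
  have hRZ : (R u)ᵀ * Z u = 0 := by
    rw [← transpose_transpose (Z u), ← transpose_mul, hZR u, transpose_zero]
  simpa [hRZ, hZR u] using (hZ u).transpose.mul (hZ u)

section LeastSquares

variable {α : Type*} [CommRing α] {k m n p : Type*} [Fintype n] [Fintype k]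

theorem transpose_mul_sub_mul_leastSquares_eq_zero [DecidableEq k] {Z : Matrix n k α}
    (hZ : IsUnit (Zᵀ * Z)) (Y : Matrix n m α) : Zᵀ * (Y - Z * ((Zᵀ * Z)⁻¹ * Zᵀ * Y)) = 0 := by
  rw [Matrix.mul_sub, sub_eq_zero, ← Matrix.mul_assoc, ← Matrix.mul_assoc, ← Matrix.mul_assoc,
    mul_nonsing_inv _ ((isUnit_iff_isUnit_det _).mp hZ), Matrix.one_mul]

theorem mul_transpose_mul_eq_transpose_mul_self_of_transpose_mul_eq_zero [Fintype m]
    {Z : Matrix n k α} {Y : Matrix n m α} {W : Matrix k m α} (C : Matrix p m α)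
    (h : Zᵀ * (Y - Z * W) = 0) :
    C * Yᵀ * ((Y - Z * W) * Cᵀ) = ((Y - Z * W) * Cᵀ)ᵀ * ((Y - Z * W) * Cᵀ) := by
  have hE : (Y - Z * W)ᵀ * (Y - Z * W) = Yᵀ * (Y - Z * W) := by
    rw [transpose_sub, Matrix.sub_mul, transpose_mul, Matrix.mul_assoc, h, Matrix.mul_zero,
      sub_zero]
  calc C * Yᵀ * ((Y - Z * W) * Cᵀ) = C * (Yᵀ * (Y - Z * W)) * Cᵀ := by
        simp only [Matrix.mul_assoc]
    _ = ((Y - Z * W) * Cᵀ)ᵀ * ((Y - Z * W) * Cᵀ) := by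
        simp only [← hE, transpose_mul, transpose_transpose, Matrix.mul_assoc]

end LeastSquares

/-- Under FA* dynamics `dZ/dt = (Y − Ŷ)Cᵀ` with `W = (ZᵀZ)⁻¹ZᵀY`,
`Ŷ = ZW`, the alignment matrix `A = (ZᵀZ)⁻¹CWᵀ + WCᵀ(ZᵀZ)⁻¹` satisfies
`dA/dt = 2(ZᵀZ)⁻¹RᵀR(ZᵀZ)⁻¹` where `R = (Y − Ŷ)Cᵀ`. -/
theorem stmt3 (n m r : ℕ)
    (Y : Matrix (Fin n) (Fin m) ℝ) (C : Matrix (Fin r) (Fin m) ℝ)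
    (Z : ℝ → Matrix (Fin n) (Fin r) ℝ)
    (hZ : ∀ t : ℝ, IsUnit ((Z t)ᵀ * Z t))
    (W : ℝ → Matrix (Fin r) (Fin m) ℝ)
    (hW : ∀ t, W t = ((Z t)ᵀ * Z t)⁻¹ * (Z t)ᵀ * Y)
    (R : ℝ → Matrix (Fin n) (Fin r) ℝ)
    (hR : ∀ t, R t = (Y - Z t * W t) * Cᵀ)
    (A : ℝ → Matrix (Fin r) (Fin r) ℝ)
    (hA : ∀ t, A t = ((Z t)ᵀ * Z t)⁻¹ * C * (W t)ᵀ + W t * Cᵀ * ((Z t)ᵀ * Z t)⁻¹)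
    (hdyn : ∀ t : ℝ, ∀ i j, HasDerivAt (fun s => Z s i j) ((R t) i j) t) :
    ∀ t : ℝ, ∀ i j, HasDerivAt (fun s => A s i j)
      (((2 : ℝ) • (((Z t)ᵀ * Z t)⁻¹ * (R t)ᵀ * R t * ((Z t)ᵀ * Z t)⁻¹)) i j) t := by
  intro t
  have hnormal (s : ℝ) : (Z s)ᵀ * (Y - Z s * W s) = 0 := by
    rw [hW s]; exact transpose_mul_sub_mul_leastSquares_eq_zero (hZ s) Y
  have hZR (s : ℝ) : (Z s)ᵀ * R s = 0 := by
    rw [hR s, ← Matrix.mul_assoc, hnormal s, Matrix.zero_mul]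
  set G := ((Z t)ᵀ * Z t)⁻¹
  have hG (s : ℝ) : ((Z s)ᵀ * Z s)⁻¹ = G := by
    rw [transpose_mul_self_eq_of_hasMatrixDerivAt hdyn hZR s t]
  have hG_symm : Gᵀ = G := by rw [transpose_nonsing_inv, transpose_mul, transpose_transpose]
  have hA_eq (s : ℝ) : A s = G * C * Yᵀ * Z s * G + (G * C * Yᵀ * Z s * G)ᵀ := by
    simp only [hA s, hW s, hG s, transpose_mul, transpose_transpose, hG_symm, Matrix.mul_assoc]
  have hRR : C * Yᵀ * R t = (R t)ᵀ * R t := by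
    rw [hR t]; exact mul_transpose_mul_eq_transpose_mul_self_of_transpose_mul_eq_zero C (hnormal t)
  have hB : HasMatrixDerivAt (fun s => G * C * Yᵀ * Z s * G) (G * (R t)ᵀ * R t * G) t := by
    simpa only [Matrix.mul_assoc, hRR] using HasMatrixDerivAt.const_mul_mul (G * C * Yᵀ) G (hdyn t)
  have hB'_symm : (G * (R t)ᵀ * R t * G)ᵀ = G * (R t)ᵀ * R t * G := by
    simp only [transpose_mul, transpose_transpose, hG_symm, Matrix.mul_assoc]
  have hA' := hB.add hB.transpose
  rw [hB'_symm, ← two_smul ℝ] at hA'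
  rw [show A = _ from funext hA_eq]
  exact hA'
end

section
/- Under FA* dynamics with ZᵀZ = I (orthonormal Z), the loss ℓ(t) = ‖(Y − Ŷ(t))Cᵀ‖_F² satisfies dℓ/dt = −Tr(R A Rᵀ), where R = (Y − Ŷ)Cᵀ and A = CWᵀ + WCᵀ with W = ZᵀY. -/
open Matrix BigOperators

/-!
Along `Ż = R` the residual `R = (Y − ZZᵀY)Cᵀ` moves with `Ṙ = −(RW + Z RᵀY)Cᵀ`, and
`ℓ̇ = 2 tr(Ṙ Rᵀ)`. Orthonormality of `Z` gives `ZᵀR = 0`, which kills the term through `Z`;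
the remaining `−2 tr(R W Cᵀ Rᵀ)` is `−tr(R A Rᵀ)` because the trace is invariant under
transposition.
-/

-- Derivatives of matrix-valued maps are taken for the entrywise sup norm, so they are entrywise.
attribute [local instance] Matrix.normedAddCommGroup Matrix.normedSpace

section MatrixCalculus

variable {𝕜 : Type*} [NontriviallyNormedField 𝕜] {k m n p : Type*} [Fintype n] {t : 𝕜}

theorem hasDerivAt_matrix_iff {M : 𝕜 → Matrix m n 𝕜} {M' : Matrix m n 𝕜} :
    HasDerivAt M M' t ↔ ∀ i j, HasDerivAt (fun s => M s i j) (M' i j) t :=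
  hasDerivAt_pi.trans (forall_congr' fun _ => hasDerivAt_pi)

variable [Fintype m]

theorem HasDerivAt.matrix_mul {M : 𝕜 → Matrix k m 𝕜} {N : 𝕜 → Matrix m n 𝕜}
    {M' : Matrix k m 𝕜} {N' : Matrix m n 𝕜} (hM : HasDerivAt M M' t) (hN : HasDerivAt N N' t) :
    HasDerivAt (fun s => M s * N s) (M' * N t + M t * N') t := by
  rw [hasDerivAt_matrix_iff] at *
  intro i j
  simp only [Matrix.add_apply, mul_apply, ← Finset.sum_add_distrib]
  exact HasDerivAt.fun_sum fun l _ => (hM i l).fun_mul (hN l j)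

theorem HasDerivAt.matrix_transpose {M : 𝕜 → Matrix m n 𝕜} {M' : Matrix m n 𝕜}
    (hM : HasDerivAt M M' t) : HasDerivAt (fun s => (M s)ᵀ) M'ᵀ t :=
  hasDerivAt_matrix_iff.2 fun i j => hasDerivAt_matrix_iff.1 hM j i

theorem HasDerivAt.matrix_sum_sq {M : 𝕜 → Matrix m n 𝕜} {M' : Matrix m n 𝕜}
    (hM : HasDerivAt M M' t) :
    HasDerivAt (fun s => ∑ i, ∑ j, M s i j ^ 2) (2 * trace (M' * (M t)ᵀ)) t := by
  have h := HasDerivAt.fun_sum fun i (_ : i ∈ Finset.univ) =>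
    HasDerivAt.fun_sum fun j (_ : j ∈ Finset.univ) => (hasDerivAt_matrix_iff.1 hM i j).fun_pow 2
  refine h.congr_deriv ?_
  simp only [trace, diag, mul_apply, transpose_apply, Finset.mul_sum]
  refine Finset.sum_congr rfl fun i _ => Finset.sum_congr rfl fun j _ => ?_
  push_cast
  ring

end MatrixCalculus

section ProjResidual

variable {R : Type*} [CommRing R] {k m n p : Type*} [Fintype m] [Fintype n] [Fintype p]

/-- The paper's `R = (Y − Ŷ)Cᵀ` with `Ŷ = ZZᵀY`. -/
def projResidual (Y : Matrix m p R) (C : Matrix k p R) (Z : Matrix m n R) : Matrix m k R :=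
  (Y - Z * (Zᵀ * Y)) * Cᵀ

theorem transpose_mul_projResidual [DecidableEq n] {Z : Matrix m n R} (hZ : Zᵀ * Z = 1)
    (Y : Matrix m p R) (C : Matrix k p R) : Zᵀ * projResidual Y C Z = 0 := by
  rw [projResidual, ← Matrix.mul_assoc, Matrix.mul_sub, ← Matrix.mul_assoc, hZ, Matrix.one_mul,
    sub_self, Matrix.zero_mul]

theorem HasDerivAt.projResidual {𝕜 : Type*} [NontriviallyNormedField 𝕜] [Fintype k]
    {Z : 𝕜 → Matrix m n 𝕜} {Z' : Matrix m n 𝕜} {t : 𝕜} (hZ : HasDerivAt Z Z' t)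
    (Y : Matrix m p 𝕜) (C : Matrix k p 𝕜) :
    HasDerivAt (fun s => projResidual Y C (Z s))
      (-((Z' * ((Z t)ᵀ * Y) + Z t * (Z'ᵀ * Y)) * Cᵀ)) t := by
  have h := ((hasDerivAt_const t Y).sub
    (hZ.matrix_mul (hZ.matrix_transpose.matrix_mul (hasDerivAt_const t Y)))).matrix_mul
      (hasDerivAt_const t Cᵀ)
  refine h.congr_deriv ?_
  simp only [zero_sub, Matrix.mul_zero, add_zero, Matrix.neg_mul]

theorem two_mul_trace_projResidual_deriv {Z E : Matrix m n R} (hZE : Zᵀ * E = 0)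
    (W : Matrix n p R) (Y : Matrix m p R) (C : Matrix n p R) :
    2 * trace (-((E * W + Z * (Eᵀ * Y)) * Cᵀ) * Eᵀ) = -trace (E * (C * Wᵀ + W * Cᵀ) * Eᵀ) := by
  have hcross : trace (Z * (Eᵀ * Y) * Cᵀ * Eᵀ) = 0 := by
    rw [trace_mul_comm, ← Matrix.mul_assoc, ← Matrix.mul_assoc, ← transpose_transpose (Eᵀ * Z),
      transpose_mul, transpose_transpose, hZE]
    simp
  have hsymm : trace (E * (C * Wᵀ) * Eᵀ) = trace (E * (W * Cᵀ) * Eᵀ) := by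
    rw [← trace_transpose]
    simp only [transpose_mul, transpose_transpose, Matrix.mul_assoc]
  rw [Matrix.neg_mul, trace_neg, Matrix.add_mul, Matrix.add_mul, trace_add, hcross,
    Matrix.mul_add, Matrix.add_mul, trace_add, hsymm, Matrix.mul_assoc E W]
  ring

end ProjResidual

/-- Under FA* dynamics with `ZᵀZ = I`, the loss
`ℓ(t) = ‖(Y − Ŷ(t))Cᵀ‖_F²` satisfies `dℓ/dt = −Tr(R A Rᵀ)`, where
`R = (Y − Ŷ)Cᵀ`, `A = CWᵀ + WCᵀ`, `W = ZᵀY`, `Ŷ = ZZᵀY`. -/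
theorem stmt4 (n m r : ℕ)
    (Y : Matrix (Fin n) (Fin m) ℝ) (C : Matrix (Fin r) (Fin m) ℝ)
    (Z : ℝ → Matrix (Fin n) (Fin r) ℝ)
    (horth : ∀ t : ℝ, (Z t)ᵀ * Z t = 1)
    (W : ℝ → Matrix (Fin r) (Fin m) ℝ) (hW : ∀ t, W t = (Z t)ᵀ * Y)
    (R : ℝ → Matrix (Fin n) (Fin r) ℝ)
    (hR : ∀ t, R t = (Y - Z t * W t) * Cᵀ)
    (A : ℝ → Matrix (Fin r) (Fin r) ℝ)
    (hA : ∀ t, A t = C * (W t)ᵀ + W t * Cᵀ)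
    (hdyn : ∀ t : ℝ, ∀ i j, HasDerivAt (fun s => Z s i j) ((R t) i j) t)
    (ℓ : ℝ → ℝ) (hℓ : ∀ t, ℓ t = ∑ i, ∑ j, (R t i j) ^ 2) :
    ∀ t : ℝ, HasDerivAt ℓ (-(Matrix.trace (R t * A t * (R t)ᵀ))) t := by
  intro t
  have hRfun : R = fun s => projResidual Y C (Z s) := funext fun s => by rw [hR, hW]; rfl
  have hZR : (Z t)ᵀ * R t = 0 := by
    rw [hRfun]
    exact transpose_mul_projResidual (horth t) Y C
  have hRderiv := (hasDerivAt_matrix_iff.2 (hdyn t)).projResidual Y C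
  rw [← hRfun, ← hW t] at hRderiv
  rw [funext hℓ, hA t, ← two_mul_trace_projResidual_deriv hZR (W t) Y C]
  exact hRderiv.matrix_sum_sq
end

section
/- Under FA* dynamics, for every fixed vector x ∈ ℝʳ, the map t ↦ xᵀA(t)x is nondecreasing, where A = (ZᵀZ)⁻¹CWᵀ + WCᵀ(ZᵀZ)⁻¹. Consequently the minimum eigenvalue of A(t) is nondecreasing in t. -/
/-!
Since `W` is the least-squares fit of `Y` on the columns of `Z`, the residual `Y - ZW` is
orthogonal to them, so `ZᵀR = 0`. Hence `d(ZᵀZ)/dt = RᵀZ + ZᵀR = 0`: the Gram matrix `S = ZᵀZ`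
is constant along the flow. With `u = S⁻¹x` fixed, `xᵀAx = 2 uᵀ(ZᵀYCᵀ)u`, whose derivative is
`2 uᵀRᵀYCᵀu = 2 uᵀRᵀRu = 2‖Ru‖² ≥ 0` (again because `RᵀZ = 0`). The minimum eigenvalue is the
minimum of the Rayleigh quotient, an infimum of nondecreasing functions.
-/

open Matrix

section Algebra

variable {α : Type*} [CommRing α] {n m r : Type*} [Fintype n] [Fintype r]

theorem transpose_mul_sub_mul_inv_mul_eq_zero [DecidableEq r] {Z : Matrix n r α}
    (hZ : IsUnit (Zᵀ * Z)) (Y : Matrix n m α) : Zᵀ * (Y - Z * ((Zᵀ * Z)⁻¹ * Zᵀ * Y)) = 0 := by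
  rw [Matrix.mul_sub, Matrix.mul_assoc _ Zᵀ, ← Matrix.mul_assoc Zᵀ,
    mul_nonsing_inv_cancel_left _ _ ((isUnit_iff_isUnit_det _).1 hZ), sub_self]

theorem transpose_mul_mul_transpose_eq_transpose_mul_self [Fintype m] {Z : Matrix n r α}
    {R : Matrix n r α} {Y : Matrix n m α} {W : Matrix r m α} {C : Matrix r m α}
    (horth : Zᵀ * R = 0) (hR : R = (Y - Z * W) * Cᵀ) : Rᵀ * (Y * Cᵀ) = Rᵀ * R := by
  have hRZ : Rᵀ * (Z * W * Cᵀ) = 0 := by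
    rw [Matrix.mul_assoc, ← Matrix.mul_assoc, ← transpose_transpose Z, ← transpose_mul, horth,
      transpose_zero, Matrix.zero_mul]
  calc Rᵀ * (Y * Cᵀ) = Rᵀ * (Y * Cᵀ) - Rᵀ * (Z * W * Cᵀ) := by rw [hRZ, sub_zero]
    _ = Rᵀ * R := by rw [← Matrix.mul_sub, ← Matrix.sub_mul, ← hR]

theorem dotProduct_mul_mul_transpose_add_mulVec [Fintype m] {G : Matrix r r α} (hG : G.IsSymm)
    (C : Matrix r m α) (N : Matrix r n α) (Y : Matrix n m α) (x : r → α) :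
    x ⬝ᵥ (G * C * (G * N * Y)ᵀ + G * N * Y * Cᵀ * G) *ᵥ x =
      2 * ((G *ᵥ x) ⬝ᵥ (N * (Y * Cᵀ)) *ᵥ (G *ᵥ x)) := by
  have hB : G * C * (G * N * Y)ᵀ = (G * N * Y * Cᵀ * G)ᵀ := by
    simp only [transpose_mul, transpose_transpose, hG.eq, Matrix.mul_assoc]
  have hGx : x ᵥ* G = G *ᵥ x := by rw [← vecMul_transpose, hG.eq]
  have hsandwich :
      x ⬝ᵥ (G * N * Y * Cᵀ * G) *ᵥ x = (G *ᵥ x) ⬝ᵥ (N * (Y * Cᵀ)) *ᵥ (G *ᵥ x) := by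
    rw [Matrix.mul_assoc G N, Matrix.mul_assoc G, Matrix.mul_assoc N, ← mulVec_mulVec,
      ← mulVec_mulVec, dotProduct_mulVec, hGx]
  rw [hB, add_mulVec, dotProduct_add, dotProduct_mulVec, vecMul_transpose, dotProduct_comm,
    hsandwich, two_mul]

end Algebra

section Calculus

variable {𝕜 : Type*} [NontriviallyNormedField 𝕜] {l m n : Type*} [Fintype m] {t : 𝕜}

theorem hasDerivAt_matrix_mul_apply {A : 𝕜 → Matrix l m 𝕜} {B : 𝕜 → Matrix m n 𝕜}
    {A' : Matrix l m 𝕜} {B' : Matrix m n 𝕜}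
    (hA : ∀ i j, HasDerivAt (fun s => A s i j) (A' i j) t)
    (hB : ∀ i j, HasDerivAt (fun s => B s i j) (B' i j) t) (i : l) (k : n) :
    HasDerivAt (fun s => (A s * B s) i k) ((A' * B t + A t * B') i k) t := by
  simp only [mul_apply, Matrix.add_apply]
  rw [← Finset.sum_add_distrib]
  exact HasDerivAt.fun_sum fun j _ => (hA i j).mul (hB j k)

theorem hasDerivAt_dotProduct_mulVec {M : 𝕜 → Matrix m n 𝕜} {M' : Matrix m n 𝕜} [Fintype n]
    (hM : ∀ i j, HasDerivAt (fun s => M s i j) (M' i j) t) (u : m → 𝕜) (v : n → 𝕜) :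
    HasDerivAt (fun s => u ⬝ᵥ M s *ᵥ v) (u ⬝ᵥ M' *ᵥ v) t := by
  simp only [dotProduct, mulVec, Finset.mul_sum]
  exact HasDerivAt.fun_sum fun i _ => HasDerivAt.fun_sum fun j _ =>
    ((hM i j).mul_const (v j)).const_mul (u i)

end Calculus

section Flow

variable {n r : Type*} [Fintype n] {Z R : ℝ → Matrix n r ℝ}

theorem transpose_mul_self_eq_of_transpose_mul_deriv_eq_zero
    (hZ : ∀ t i j, HasDerivAt (fun s => Z s i j) (R t i j) t)
    (horth : ∀ t, (Z t)ᵀ * R t = 0) (t s : ℝ) : (Z t)ᵀ * Z t = (Z s)ᵀ * Z s := by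
  have hgram : ∀ t i j, HasDerivAt (fun s => ((Z s)ᵀ * Z s) i j) 0 t := fun t i j => by
    have h := hasDerivAt_matrix_mul_apply (A := fun s => (Z s)ᵀ) (A' := (R t)ᵀ)
      (fun i j => hZ t j i) (hZ t) i j
    rwa [← transpose_transpose (Z t), ← transpose_mul, transpose_transpose, horth,
      transpose_zero, zero_add] at h
  ext i j
  exact is_const_of_deriv_eq_zero (fun s => (hgram s i j).differentiableAt)
    (fun s => (hgram s i j).deriv) t s

theorem monotone_dotProduct_transpose_mul_mulVec [Fintype r] (B : Matrix n r ℝ)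
    (hZ : ∀ t i j, HasDerivAt (fun s => Z s i j) (R t i j) t)
    (hB : ∀ t, (R t)ᵀ * B = (R t)ᵀ * R t) (u : r → ℝ) :
    Monotone fun t => u ⬝ᵥ ((Z t)ᵀ * B) *ᵥ u := by
  have hderiv : ∀ t, HasDerivAt (fun s => u ⬝ᵥ ((Z s)ᵀ * B) *ᵥ u)
      (u ⬝ᵥ ((R t)ᵀ * R t) *ᵥ u) t := fun t => by
    have h := hasDerivAt_dotProduct_mulVec
      (hasDerivAt_matrix_mul_apply (A := fun s => (Z s)ᵀ) (A' := (R t)ᵀ) (B' := 0)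
        (fun i j => hZ t j i) (fun i j => hasDerivAt_const t (B i j))) u u
    rwa [Matrix.mul_zero, add_zero, hB] at h
  refine monotone_of_deriv_nonneg (fun t => (hderiv t).differentiableAt) fun t => ?_
  rw [(hderiv t).deriv]
  simpa using (posSemidef_conjTranspose_mul_self (R t)).dotProduct_mulVec_nonneg u

end Flow

namespace Matrix.IsHermitian

variable {n : Type*} [Fintype n] [DecidableEq n] {A : Matrix n n ℝ}

theorem iInf_eigenvalues_mul_dotProduct_self_le (hA : A.IsHermitian) (x : n → ℝ) :
    (⨅ i, hA.eigenvalues i) * (x ⬝ᵥ x) ≤ x ⬝ᵥ A *ᵥ x := by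
  set c := ⨅ i, hA.eigenvalues i
  have hc : 0 ≤ hA.eigenvalues - Function.const n c := fun i =>
    sub_nonneg.2 (ciInf_le (Finite.bddBelow_range _) i)
  have hdiag :
      diagonal (hA.eigenvalues - Function.const n c) = diagonal hA.eigenvalues - c • 1 := by
    rw [smul_one_eq_diagonal, diagonal_sub]; rfl
  have hspec : A - c • 1 = (hA.eigenvectorUnitary : Matrix n n ℝ) *
      diagonal (hA.eigenvalues - Function.const n c) *
        star (hA.eigenvectorUnitary : Matrix n n ℝ) := by
    conv_lhs => rw [hA.spectral_theorem]
    simp [hdiag, mul_sub, sub_mul]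
  have hpsd : (A - c • 1).PosSemidef :=
    hspec ▸ (PosSemidef.diagonal hc).mul_mul_conjTranspose_same _
  have := hpsd.dotProduct_mulVec_nonneg x
  simp only [star_trivial, sub_mulVec, smul_mulVec, one_mulVec, dotProduct_sub, dotProduct_smul,
    smul_eq_mul] at this
  linarith

theorem dotProduct_self_eigenvectorBasis (hA : A.IsHermitian) (i : n) :
    ⇑(hA.eigenvectorBasis i) ⬝ᵥ ⇑(hA.eigenvectorBasis i) = 1 := by
  have h := real_inner_self_eq_norm_sq (hA.eigenvectorBasis i)
  rw [(hA.eigenvectorBasis).orthonormal.1 i, EuclideanSpace.inner_eq_star_dotProduct] at h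
  simpa using h

end Matrix.IsHermitian

theorem Matrix.monotone_iInf_eigenvalues {ι n : Type*} [Preorder ι] [Fintype n] [DecidableEq n]
    {A : ι → Matrix n n ℝ} (hA : ∀ t, (A t).IsHermitian)
    (hmono : ∀ x, Monotone fun t => x ⬝ᵥ A t *ᵥ x) :
    Monotone fun t => ⨅ i, (hA t).eigenvalues i := by
  intro t t' htt'
  cases isEmpty_or_nonempty n
  · simp
  obtain ⟨i, hi⟩ := exists_eq_ciInf_of_finite (f := (hA t').eigenvalues)
  set v := ⇑((hA t').eigenvectorBasis i)
  have hv : v ⬝ᵥ v = 1 := (hA t').dotProduct_self_eigenvectorBasis i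
  calc ⨅ i, (hA t).eigenvalues i = (⨅ i, (hA t).eigenvalues i) * (v ⬝ᵥ v) := by
        rw [hv, mul_one]
    _ ≤ v ⬝ᵥ A t *ᵥ v := (hA t).iInf_eigenvalues_mul_dotProduct_self_le v
    _ ≤ v ⬝ᵥ A t' *ᵥ v := hmono v htt'
    _ = ⨅ i, (hA t').eigenvalues i := by
      rw [(hA t').mulVec_eigenvectorBasis, dotProduct_smul, hv, hi, smul_eq_mul, mul_one]

/-- Under FA* dynamics, for every fixed `x ∈ ℝʳ` the map
`t ↦ xᵀA(t)x` is nondecreasing, where `A = (ZᵀZ)⁻¹CWᵀ + WCᵀ(ZᵀZ)⁻¹`;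
consequently the minimum eigenvalue of `A(t)` is nondecreasing in `t`. -/
theorem stmt6 (n m r : ℕ)
    (Y : Matrix (Fin n) (Fin m) ℝ) (C : Matrix (Fin r) (Fin m) ℝ)
    (Z : ℝ → Matrix (Fin n) (Fin r) ℝ)
    (hZ : ∀ t : ℝ, IsUnit ((Z t)ᵀ * Z t))
    (W : ℝ → Matrix (Fin r) (Fin m) ℝ)
    (hW : ∀ t, W t = ((Z t)ᵀ * Z t)⁻¹ * (Z t)ᵀ * Y)
    (R : ℝ → Matrix (Fin n) (Fin r) ℝ)
    (hR : ∀ t, R t = (Y - Z t * W t) * Cᵀ)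
    (A : ℝ → Matrix (Fin r) (Fin r) ℝ)
    (hA : ∀ t, A t = ((Z t)ᵀ * Z t)⁻¹ * C * (W t)ᵀ + W t * Cᵀ * ((Z t)ᵀ * Z t)⁻¹)
    (hdyn : ∀ t : ℝ, ∀ i j, HasDerivAt (fun s => Z s i j) ((R t) i j) t)
    (hHerm : ∀ t, (A t).IsHermitian) :
    (∀ x : Fin r → ℝ, Monotone (fun t => x ⬝ᵥ (A t) *ᵥ x)) ∧
      Monotone (fun t => ⨅ i, (hHerm t).eigenvalues i) := by
  have horth : ∀ t, (Z t)ᵀ * R t = 0 := fun t => by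
    rw [hR, hW, ← Matrix.mul_assoc, transpose_mul_sub_mul_inv_mul_eq_zero (hZ t),
      Matrix.zero_mul]
  have hgram := transpose_mul_self_eq_of_transpose_mul_deriv_eq_zero hdyn horth
  have hvel : ∀ t, (R t)ᵀ * (Y * Cᵀ) = (R t)ᵀ * R t := fun t =>
    transpose_mul_mul_transpose_eq_transpose_mul_self (horth t) (hR t)
  set G := ((Z 0)ᵀ * Z 0)⁻¹
  have hG : G.IsSymm := IsSymm.inv (by rw [IsSymm, transpose_mul, transpose_transpose])
  have hquad : ∀ x t, x ⬝ᵥ A t *ᵥ x = 2 * ((G *ᵥ x) ⬝ᵥ ((Z t)ᵀ * (Y * Cᵀ)) *ᵥ (G *ᵥ x)) :=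
    fun x t => by
      rw [hA, hW, hgram t 0]
      exact dotProduct_mul_mul_transpose_add_mulVec hG C _ Y x
  have hmono : ∀ x : Fin r → ℝ, Monotone fun t => x ⬝ᵥ A t *ᵥ x := fun x => by
    simp only [hquad x]
    exact (monotone_dotProduct_transpose_mul_mulVec _ hdyn hvel _).const_mul zero_le_two
  exact ⟨hmono, monotone_iInf_eigenvalues hHerm hmono⟩
end

section
/- Let v₁,…,vₙ : ℝ → ℝʳ be integrable vector-valued functions such that for all T ≥ 0 and all k, ∑ᵢ ∫₀ᵀ ⟨vₖ(T), vᵢ(t)⟩² dt ≤ c‖vₖ(T)‖² for some constant c ≥ 0. Then for all T ≥ 0, ∑ᵢ ∫₀ᵀ ‖vᵢ(t)‖² dt ≤ 2rc. -/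
/-!
Let `L_T = ∑ᵢ ∫₀ᵀ vᵢ vᵢᵀ` and `f(T) = tr L_T = ∑ᵢ ∫₀ᵀ ‖vᵢ‖²`. Applying `(∫₀ᵀ h)² = 2 ∫₀ᵀ h(s) ∫₀ˢ h`
to each entry of `L_T` gives
`∑ⱼₗ (L_T)ⱼₗ² = 2 ∫₀ᵀ ∑ₖ vₖ(s)ᵀ L_s vₖ(s) ds = 2 ∫₀ᵀ ∑ₖ ∑ᵢ ∫₀ˢ ⟨vₖ(s), vᵢ(t)⟩² dt ds ≤ 2c f(T)`,
while Cauchy–Schwarz on the diagonal gives `f(T)² ≤ r ∑ⱼₗ (L_T)ⱼₗ²`. Hence `f(T)² ≤ 2rc f(T)`.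

The hypotheses see `vᵢ` only through `‖vᵢ‖²` and `⟨vₖ(S), vᵢ(·)⟩²`. The entries of `vᵢ vᵢᵀ` are
nevertheless measurable: `⟨xxᵀ, yyᵀ⟩ = ⟨x, y⟩²` for the Frobenius product, and the matrices
`vₖ(S) vₖ(S)ᵀ` span a space containing every `vᵢ(t) vᵢ(t)ᵀ`.
-/

open Matrix MeasureTheory BigOperators Set

theorem aemeasurable_of_aemeasurable_inner {α E : Type*} [MeasurableSpace α] {μ : Measure α}
    [NormedAddCommGroup E] [InnerProductSpace ℝ E] [FiniteDimensional ℝ E]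
    [MeasurableSpace E] [BorelSpace E] {f : α → E} {S : Set E}
    (hfS : ∀ t, f t ∈ Submodule.span ℝ S)
    (hS : ∀ s ∈ S, AEMeasurable (fun t => inner ℝ s (f t)) μ) : AEMeasurable f μ := by
  have hspan : ∀ y ∈ Submodule.span ℝ S, AEMeasurable (fun t => inner ℝ y (f t)) μ := by
    intro y hy
    induction hy using Submodule.span_induction with
    | mem y hy => exact hS y hy
    | zero => simpa only [inner_zero_left] using aemeasurable_const
    | add y z _ _ hy hz => simpa only [inner_add_left] using hy.fun_add hz
    | smul a y _ hy => simpa only [real_inner_smul_left] using hy.const_mul a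
  let b := stdOrthonormalBasis ℝ (Submodule.span ℝ S)
  have hexpand : f = fun t => ∑ i, inner ℝ (b i : E) (f t) • (b i : E) := by
    funext t
    simpa using (congrArg Subtype.val (b.sum_repr' ⟨f t, hfS t⟩)).symm
  rw [hexpand]
  exact Finset.aemeasurable_fun_sum _ fun i _ => (hspan _ (b i).2).smul_const _

/-- `x xᵀ`, as a Euclidean vector so that its inner product is the Frobenius one. -/
noncomputable def outerSelf {ι : Type*} (x : ι → ℝ) : EuclideanSpace ℝ (ι × ι) :=
  WithLp.toLp 2 fun p => x p.1 * x p.2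

theorem inner_outerSelf {ι : Type*} [Fintype ι] (x y : ι → ℝ) :
    inner ℝ (outerSelf x) (outerSelf y) = (x ⬝ᵥ y) ^ 2 := by
  simp only [outerSelf, PiLp.inner_apply, RCLike.inner_apply, conj_trivial, Fintype.sum_prod_type,
    dotProduct, sq, Finset.sum_mul_sum]
  exact Finset.sum_congr rfl fun j _ => Finset.sum_congr rfl fun l _ => by ring

theorem aemeasurable_apply_mul_apply {α ι : Type*} [Fintype ι] [MeasurableSpace α]
    {μ : Measure α} {f : α → ι → ℝ} {A : Set (ι → ℝ)} (hfA : ∀ t, f t ∈ A)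
    (hA : ∀ x ∈ A, AEMeasurable (fun t => (x ⬝ᵥ f t) ^ 2) μ) (j l : ι) :
    AEMeasurable (fun t => f t j * f t l) μ := by
  have houter : AEMeasurable (fun t => outerSelf (f t)) μ := by
    refine aemeasurable_of_aemeasurable_inner (S := outerSelf '' A)
      (fun t => Submodule.subset_span ⟨f t, hfA t, rfl⟩) ?_
    rintro _ ⟨x, hx, rfl⟩
    simpa only [inner_outerSelf] using hA x hx
  exact (EuclideanSpace.proj (𝕜 := ℝ) (j, l)).continuous.measurable.comp_aemeasurable houter

theorem abs_apply_mul_apply_le_dotProduct_self {ι : Type*} [Fintype ι] (x : ι → ℝ) (j l : ι) :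
    |x j * x l| ≤ x ⬝ᵥ x := by
  have hle : ∀ m, x m ^ 2 ≤ x ⬝ᵥ x := fun m =>
    (sq (x m)).symm ▸ Finset.single_le_sum (f := fun m => x m * x m) (fun m _ => mul_self_nonneg _)
      (Finset.mem_univ m)
  rw [abs_mul]
  nlinarith [two_mul_le_add_sq |x j| |x l|, sq_abs (x j), sq_abs (x l), hle j, hle l]

theorem integrable_apply_mul_apply {α ι : Type*} [Fintype ι] [MeasurableSpace α]
    {μ : Measure α} {f : α → ι → ℝ} {A : Set (ι → ℝ)} (hf : Integrable (fun t => f t ⬝ᵥ f t) μ)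
    (hfA : ∀ t, f t ∈ A) (hA : ∀ x ∈ A, AEMeasurable (fun t => (x ⬝ᵥ f t) ^ 2) μ) (j l : ι) :
    Integrable (fun t => f t j * f t l) μ :=
  hf.mono' (aemeasurable_apply_mul_apply hfA hA j l).aestronglyMeasurable
    (Filter.Eventually.of_forall fun t => abs_apply_mul_apply_le_dotProduct_self (f t) j l)

theorem setIntegral_Ioc_indicator_Iic {h : ℝ → ℝ} {a b s : ℝ} (hs : s ≤ b) :
    ∫ t in Ioc a b, (Iic s).indicator h t = ∫ t in Ioc a s, h t := by
  rw [integral_indicator measurableSet_Iic, Measure.restrict_restrict measurableSet_Iic,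
    Iic_inter_Ioc_of_le hs]

theorem setIntegral_Ioc_indicator_Ici {h : ℝ → ℝ} {a b t : ℝ} (hh : IntegrableOn h (Ioc a b))
    (ht : t ∈ Ioc a b) :
    ∫ s in Ioc a b, (Ici t).indicator h s = (∫ s in Ioc a b, h s) - ∫ s in Ioc a t, h s := by
  have hinter : Ici t ∩ Ioc a b = Icc t b := by
    ext s
    simp only [mem_inter_iff, mem_Ici, mem_Ioc, mem_Icc]
    exact ⟨fun ⟨h1, _, h3⟩ => ⟨h1, h3⟩, fun ⟨h1, h2⟩ => ⟨h1, ht.1.trans_le h1, h2⟩⟩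
  rw [integral_indicator measurableSet_Ici, Measure.restrict_restrict measurableSet_Ici, hinter,
    integral_Icc_eq_integral_Ioc, eq_sub_iff_add_eq, add_comm, ← setIntegral_union
      (Ioc_disjoint_Ioc_of_le le_rfl) measurableSet_Ioc
      (hh.mono_set (Ioc_subset_Ioc_right ht.2)) (hh.mono_set (Ioc_subset_Ioc_left ht.1.le)),
    Ioc_union_Ioc_eq_Ioc ht.1.le ht.2]

theorem sq_setIntegral_Ioc {h : ℝ → ℝ} {a b : ℝ} (hh : IntegrableOn h (Ioc a b)) :
    IntegrableOn (fun s => h s * ∫ t in Ioc a s, h t) (Ioc a b) ∧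
      (∫ t in Ioc a b, h t) ^ 2 = 2 * ∫ s in Ioc a b, h s * ∫ t in Ioc a s, h t := by
  set μ := volume.restrict (Ioc a b)
  set A := ∫ t in Ioc a b, h t
  set K : ℝ → ℝ := fun s => ∫ t in Ioc a s, h t
  -- Integrate `h s * h t` over the triangle `t ≤ s` in both orders.
  set F : ℝ × ℝ → ℝ := fun q => h q.1 * (Iic q.1).indicator h q.2
  have hF : Integrable F (μ.prod μ) := by
    have : F = {q : ℝ × ℝ | q.2 ≤ q.1}.indicator fun q => h q.1 * h q.2 := by
      funext q
      by_cases hq : q.2 ≤ q.1 <;> simp [F, indicator_apply, hq]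
    rw [this]
    exact (hh.mul_prod hh).indicator (measurableSet_le measurable_snd measurable_fst)
  have hslice_t : ∀ᵐ s ∂μ, ∫ t, F (s, t) ∂μ = h s * K s := by
    filter_upwards [ae_restrict_mem measurableSet_Ioc] with s hs
    change ∫ t, h s * (Iic s).indicator h t ∂μ = _
    rw [integral_const_mul, setIntegral_Ioc_indicator_Iic hs.2]
  have hslice_s : ∀ᵐ t ∂μ, ∫ s, F (s, t) ∂μ = (A - K t) * h t := by
    filter_upwards [ae_restrict_mem measurableSet_Ioc] with t ht
    have : (fun s => F (s, t)) = (Ici t).indicator fun s => h s * h t := by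
      funext s
      by_cases hts : t ≤ s <;> simp [F, indicator_apply, hts]
    rw [this, integral_indicator measurableSet_Ici, integral_mul_const,
      ← integral_indicator measurableSet_Ici, setIntegral_Ioc_indicator_Ici hh ht]
  have hint : Integrable (fun s => h s * K s) μ := hF.integral_prod_left.congr hslice_t
  have hint' : Integrable (fun t => (A - K t) * h t) μ := hF.integral_prod_right.congr hslice_s
  have hswap : ∫ s, h s * K s ∂μ = ∫ t, (A - K t) * h t ∂μ := by
    rw [← integral_congr_ae hslice_t, ← integral_congr_ae hslice_s, ← integral_prod _ hF,
      integral_prod_symm _ hF]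
  have hA : ∫ t, A * h t ∂μ = ∫ t, (A - K t) * h t ∂μ + ∫ t, h t * K t ∂μ := by
    rw [← integral_add hint' hint]
    exact integral_congr_ae (Filter.Eventually.of_forall fun t => by ring)
  rw [integral_const_mul, ← hswap] at hA
  exact ⟨hint, by rw [sq]; linarith⟩

theorem integral_dotProduct_sq {α ι : Type*} [Fintype ι] [MeasurableSpace α] {μ : Measure α}
    {w : α → ι → ℝ} (hw : ∀ j l, Integrable (fun t => w t j * w t l) μ) (x : ι → ℝ) :
    ∫ t, (x ⬝ᵥ w t) ^ 2 ∂μ = ∑ j, ∑ l, x j * x l * ∫ t, w t j * w t l ∂μ := by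
  have hexpand : ∀ t, (x ⬝ᵥ w t) ^ 2 = ∑ j, ∑ l, x j * x l * (w t j * w t l) := fun t => by
    simp only [dotProduct, sq, Finset.sum_mul_sum]
    exact Finset.sum_congr rfl fun j _ => Finset.sum_congr rfl fun l _ => by ring
  simp only [hexpand]
  rw [integral_finsetSum _ fun j _ => integrable_finsetSum _ fun l _ => (hw j l).const_mul _]
  refine Finset.sum_congr rfl fun j _ => ?_
  rw [integral_finsetSum _ fun l _ => (hw j l).const_mul _]
  simp only [integral_const_mul]

theorem sum_sum_mul_eq_sum_dotProduct_mulVec {κ ι : Type*} [Fintype κ] [Fintype ι]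
    (M : Matrix ι ι ℝ) (x : κ → ι → ℝ) :
    ∑ j, ∑ l, (∑ k, x k j * x k l) * M j l = ∑ k, x k ⬝ᵥ (M *ᵥ x k) := by
  simp only [dotProduct, mulVec, Finset.sum_mul, Finset.mul_sum]
  refine (Finset.sum_congr rfl fun j _ => Finset.sum_comm).trans (Finset.sum_comm.trans ?_)
  exact Finset.sum_congr rfl fun k _ => Finset.sum_congr rfl fun j _ =>
    Finset.sum_congr rfl fun l _ => by ring

theorem trace_sq_le_card_mul_sum_sq {ι : Type*} [Fintype ι] (A : Matrix ι ι ℝ) :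
    A.trace ^ 2 ≤ Fintype.card ι * ∑ j, ∑ l, A j l ^ 2 := by
  calc A.trace ^ 2 ≤ Fintype.card ι * ∑ j, A j j ^ 2 := sq_sum_le_card_mul_sum_sq
    _ ≤ Fintype.card ι * ∑ j, ∑ l, A j l ^ 2 := by
      gcongr with j
      exact Finset.single_le_sum (f := fun l => A j l ^ 2) (fun l _ => sq_nonneg _)
        (Finset.mem_univ j)

theorem integrableOn_dotProduct_self {κ ι : Type*} [Fintype ι] {v : κ → ℝ → ι → ℝ}
    (hv : ∀ i j l T, IntegrableOn (fun t => v i t j * v i t l) (Ioc 0 T)) (i : κ) (T : ℝ) :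
    IntegrableOn (fun t => v i t ⬝ᵥ v i t) (Ioc 0 T) :=
  integrable_finsetSum _ fun j _ => hv i j j T

section GramIntegral

variable {κ ι : Type*} [Fintype κ] [Fintype ι]

noncomputable def gramIntegral (v : κ → ℝ → ι → ℝ) (T : ℝ) : Matrix ι ι ℝ :=
  Matrix.of fun j l => ∑ i, ∫ t in Ioc 0 T, v i t j * v i t l

variable {v : κ → ℝ → ι → ℝ}

theorem trace_gramIntegral (hv : ∀ i j l T, IntegrableOn (fun t => v i t j * v i t l) (Ioc 0 T))
    (T : ℝ) : (gramIntegral v T).trace = ∑ i, ∫ t in Ioc 0 T, v i t ⬝ᵥ v i t := by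
  simp only [trace, diag, gramIntegral, of_apply, dotProduct]
  rw [Finset.sum_comm]
  exact Finset.sum_congr rfl fun i _ => (integral_finsetSum _ fun j _ => hv i j j T).symm

theorem dotProduct_gramIntegral_mulVec
    (hv : ∀ i j l T, IntegrableOn (fun t => v i t j * v i t l) (Ioc 0 T)) (x : ι → ℝ) (T : ℝ) :
    x ⬝ᵥ (gramIntegral v T *ᵥ x) = ∑ i, ∫ t in Ioc 0 T, (x ⬝ᵥ v i t) ^ 2 := by
  simp only [fun i => integral_dotProduct_sq (hv i · · T) x]
  simp only [dotProduct, mulVec, gramIntegral, of_apply, Finset.mul_sum, Finset.sum_mul]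
  refine (Finset.sum_congr rfl fun j _ => Finset.sum_comm).trans (Finset.sum_comm.trans ?_)
  exact Finset.sum_congr rfl fun i _ => Finset.sum_congr rfl fun j _ =>
    Finset.sum_congr rfl fun l _ => by ring

theorem sum_sq_gramIntegral (hv : ∀ i j l T, IntegrableOn (fun t => v i t j * v i t l) (Ioc 0 T))
    (T : ℝ) :
    IntegrableOn (fun s => ∑ k, v k s ⬝ᵥ (gramIntegral v s *ᵥ v k s)) (Ioc 0 T) ∧
      ∑ j, ∑ l, gramIntegral v T j l ^ 2 =
        2 * ∫ s in Ioc 0 T, ∑ k, v k s ⬝ᵥ (gramIntegral v s *ᵥ v k s) := by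
  have hentry : ∀ j l s, gramIntegral v s j l = ∫ t in Ioc 0 s, ∑ i, v i t j * v i t l :=
    fun j l s => (integral_finsetSum _ fun i _ => hv i j l s).symm
  have hsq : ∀ j l, _ := fun j l =>
    sq_setIntegral_Ioc (integrable_finsetSum Finset.univ fun i _ => hv i j l T)
  simp only [← hentry] at hsq
  simp only [← sum_sum_mul_eq_sum_dotProduct_mulVec]
  have hint : ∀ j, IntegrableOn
      (fun s => ∑ l, (∑ k, v k s j * v k s l) * gramIntegral v s j l) (Ioc 0 T) :=
    fun j => integrable_finsetSum _ fun l _ => (hsq j l).1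
  refine ⟨integrable_finsetSum _ fun j _ => hint j, ?_⟩
  rw [integral_finsetSum _ fun j _ => hint j, Finset.mul_sum]
  refine Finset.sum_congr rfl fun j _ => ?_
  rw [integral_finsetSum _ fun l _ => (hsq j l).1, Finset.mul_sum]
  exact Finset.sum_congr rfl fun l _ => (hsq j l).2

theorem sum_sq_gramIntegral_le
    (hv : ∀ i j l T, IntegrableOn (fun t => v i t j * v i t l) (Ioc 0 T)) {c : ℝ}
    (hbound : ∀ s, 0 ≤ s → ∀ k,
      ∑ i, ∫ t in Ioc 0 s, (v k s ⬝ᵥ v i t) ^ 2 ≤ c * (v k s ⬝ᵥ v k s)) (T : ℝ) :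
    ∑ j, ∑ l, gramIntegral v T j l ^ 2 ≤ 2 * c * (gramIntegral v T).trace := by
  obtain ⟨hint, heq⟩ := sum_sq_gramIntegral hv T
  have hpointwise : ∀ s ∈ Ioc 0 T,
      ∑ k, v k s ⬝ᵥ (gramIntegral v s *ᵥ v k s) ≤ c * ∑ k, v k s ⬝ᵥ v k s := fun s hs => by
    rw [Finset.mul_sum]
    exact Finset.sum_le_sum fun k _ =>
      (dotProduct_gramIntegral_mulVec hv _ s).trans_le (hbound s hs.1.le k)
  have hmono := setIntegral_mono_on hint
    ((integrable_finsetSum _ fun k _ => integrableOn_dotProduct_self hv k T).const_mul c)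
    measurableSet_Ioc hpointwise
  rw [integral_const_mul, integral_finsetSum _ fun k _ => integrableOn_dotProduct_self hv k T]
    at hmono
  rw [heq, trace_gramIntegral hv, mul_assoc]
  gcongr

end GramIntegral

/-- If `v₁,…,vₙ : ℝ → ℝʳ` satisfy
`∑ᵢ ∫₀ᵀ ⟨vₖ(T), vᵢ(t)⟩² dt ≤ c‖vₖ(T)‖²` for all `T ≥ 0` and all `k`,
then `∑ᵢ ∫₀ᵀ ‖vᵢ(t)‖² dt ≤ 2rc` for all `T ≥ 0`. -/
theorem stmt7 (n r : ℕ) (v : Fin n → ℝ → (Fin r → ℝ)) (c : ℝ) (hc : 0 ≤ c)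
    (hint : ∀ i : Fin n, ∀ T : ℝ,
      IntervalIntegrable (fun t => v i t ⬝ᵥ v i t) volume 0 T)
    (hint2 : ∀ i k : Fin n, ∀ S T : ℝ,
      IntervalIntegrable (fun t => (v k S ⬝ᵥ v i t) ^ 2) volume 0 T)
    (hbound : ∀ T : ℝ, 0 ≤ T → ∀ k : Fin n,
      ∑ i : Fin n, ∫ t in (0:ℝ)..T, (v k T ⬝ᵥ v i t) ^ 2 ≤ c * (v k T ⬝ᵥ v k T)) :
    ∀ T : ℝ, 0 ≤ T →
      ∑ i : Fin n, ∫ t in (0:ℝ)..T, v i t ⬝ᵥ v i t ≤ 2 * r * c := by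
  intro T hT
  have hv : ∀ i j l T, IntegrableOn (fun t => v i t j * v i t l) (Ioc 0 T) :=
    fun i j l T => integrable_apply_mul_apply (A := range (Function.uncurry v)) (hint i T).1
      (fun t => mem_range_self (i, t))
      (by rintro _ ⟨⟨k, S⟩, rfl⟩; exact (hint2 i k S T).1.aemeasurable) j l
  have hbound' : ∀ s, 0 ≤ s → ∀ k,
      ∑ i, ∫ t in Ioc 0 s, (v k s ⬝ᵥ v i t) ^ 2 ≤ c * (v k s ⬝ᵥ v k s) := fun s hs k => by
    simpa only [intervalIntegral.integral_of_le hs] using hbound s hs k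
  simp only [intervalIntegral.integral_of_le hT, ← trace_gramIntegral hv]
  have hsq : (gramIntegral v T).trace ^ 2 ≤ 2 * r * c * (gramIntegral v T).trace := by
    refine (trace_sq_le_card_mul_sum_sq _).trans ?_
    rw [Fintype.card_fin]
    nlinarith [sum_sq_gramIntegral_le hv hbound' T, (Nat.cast_nonneg r : (0 : ℝ) ≤ r)]
  have hC : 0 ≤ 2 * r * c := by positivity
  nlinarith
end

section
/- Let Y be n×m, C an r×m matrix, Z n×r of full column rank with rank(YCᵀ) = r, and suppose (Y − ZW)Cᵀ = 0 and Zᵀ(Y − ZW) = 0 where W = (ZᵀZ)⁻¹ZᵀY. Let A = YCᵀ and B = (AᵀA)⁻¹AᵀY. Then ZW = AB. -/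
/-!
The stationarity equation `(Y - ZW)Cᵀ = 0` says `A = YCᵀ = Z (WCᵀ)`, and since `A` has rank `r`
the `r × r` factor `WCᵀ` is invertible. Hence `A` and `Z` have the same column space, and the
least-squares projections `Z (ZᵀZ)⁻¹ Zᵀ` and `A (AᵀA)⁻¹ Aᵀ` coincide; applied to `Y` they give
`ZW` and `AB`.
-/

open Matrix

namespace Matrix

variable {m n K : Type*} [Fintype n] [DecidableEq n]

theorem isUnit_of_rank_eq_card [Field K] {R : Matrix n n K} (h : R.rank = Fintype.card n) :
    IsUnit R := by
  rw [← mulVec_surjective_iff_isUnit, ← coe_mulVecLin, ← LinearMap.range_eq_top]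
  apply Submodule.eq_top_of_finrank_eq
  rw [← rank, h, Module.finrank_fintype_fun_eq_card]

theorem isUnit_of_rank_mul_eq_card [Field K] {Z : Matrix m n K} {R : Matrix n n K}
    (h : (Z * R).rank = Fintype.card n) : IsUnit R :=
  isUnit_of_rank_eq_card <|
    le_antisymm R.rank_le_card_width (h ▸ rank_mul_le_right Z R)

/-- The orthogonal projection onto the column space of `Z` when `ZᵀZ` is invertible. -/
noncomputable def colProj [Fintype m] [CommRing K] (Z : Matrix m n K) : Matrix m m K :=
  Z * (Zᵀ * Z)⁻¹ * Zᵀ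

theorem colProj_mul_of_isUnit [Fintype m] [CommRing K] (Z : Matrix m n K) {U : Matrix n n K}
    (hU : IsUnit U) : colProj (Z * U) = colProj Z := by
  have hUdet : IsUnit U.det := (isUnit_iff_isUnit_det U).mp hU
  have hUtdet : IsUnit Uᵀ.det := by rwa [det_transpose]
  have hinv : ((Z * U)ᵀ * (Z * U))⁻¹ = U⁻¹ * (Zᵀ * Z)⁻¹ * Uᵀ⁻¹ := by
    rw [transpose_mul, Matrix.mul_assoc, ← Matrix.mul_assoc Zᵀ, mul_inv_rev, mul_inv_rev,
      Matrix.mul_assoc]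
  rw [colProj, colProj, hinv, transpose_mul]
  simp only [Matrix.mul_assoc]
  rw [nonsing_inv_mul_cancel_left _ _ hUtdet, mul_nonsing_inv_cancel_left _ _ hUdet]

end Matrix

theorem stmt11_general (n m r : ℕ)
    (Y : Matrix (Fin n) (Fin m) ℝ) (C : Matrix (Fin r) (Fin m) ℝ)
    (Z : Matrix (Fin n) (Fin r) ℝ)
    (hrank : (Y * Cᵀ).rank = r)
    (W : Matrix (Fin r) (Fin m) ℝ) (hW : W = (Zᵀ * Z)⁻¹ * Zᵀ * Y)
    (h1 : (Y - Z * W) * Cᵀ = 0)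
    (A : Matrix (Fin n) (Fin r) ℝ) (hA : A = Y * Cᵀ)
    (B : Matrix (Fin r) (Fin m) ℝ) (hB : B = (Aᵀ * A)⁻¹ * Aᵀ * Y) :
    Z * W = A * B := by
  have hAZ : A = Z * (W * Cᵀ) := by
    rw [hA, ← Matrix.mul_assoc, ← sub_eq_zero, ← Matrix.sub_mul, h1]
  have hunit : IsUnit (W * Cᵀ) :=
    isUnit_of_rank_mul_eq_card (by rw [← hAZ, hA, hrank, Fintype.card_fin])
  calc Z * W = colProj Z * Y := by simp only [hW, colProj, Matrix.mul_assoc]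
    _ = colProj A * Y := by rw [hAZ, colProj_mul_of_isUnit Z hunit]
    _ = A * B := by simp only [hB, colProj, Matrix.mul_assoc]

/-- Let `Z` be `n×r` of full column rank with `rank(YCᵀ) = r`,
`W = (ZᵀZ)⁻¹ZᵀY`, and suppose the stationarity equations `(Y − ZW)Cᵀ = 0` and
`Zᵀ(Y − ZW) = 0` hold. With `A = YCᵀ` and `B = (AᵀA)⁻¹AᵀY`, we have `ZW = AB`. -/
theorem stmt11 (n m r : ℕ)
    (Y : Matrix (Fin n) (Fin m) ℝ) (C : Matrix (Fin r) (Fin m) ℝ)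
    (Z : Matrix (Fin n) (Fin r) ℝ) (hZ : IsUnit (Zᵀ * Z))
    (hrank : (Y * Cᵀ).rank = r)
    (W : Matrix (Fin r) (Fin m) ℝ) (hW : W = (Zᵀ * Z)⁻¹ * Zᵀ * Y)
    (h1 : (Y - Z * W) * Cᵀ = 0) (h2 : Zᵀ * (Y - Z * W) = 0)
    (A : Matrix (Fin n) (Fin r) ℝ) (hA : A = Y * Cᵀ)
    (B : Matrix (Fin r) (Fin m) ℝ) (hB : B = (Aᵀ * A)⁻¹ * Aᵀ * Y) :
    Z * W = A * B :=
  stmt11_general n m r Y C Z hrank W hW h1 A hA B hB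
end

section
/- Let ℓ : [0,∞) → ℝ be continuously differentiable, bounded below by 0, and suppose ∫₀ᵀ (dℓ/dt)𝟙[dℓ/dt ≥ 0] dt ≤ M for all T and some finite M. Suppose further that for every ε > 0 and every T ≥ 0 there exists t ≥ T with ℓ(t) ≤ ε. Then lim_{t→∞} ℓ(t) = 0. -/
/-!
Since the positive part of `ℓ'` has finite total integral, its integrals over `[t, s]` become
uniformly small for large `t`, so by the fundamental theorem of calculus `ℓ` can increase by
at most `ε` after some time. Once `ℓ` has dipped below `ε` past that time, it stays below `2ε`.
-/

open MeasureTheory Filter Topology Set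

theorem sub_le_integral_max_deriv_zero {f : ℝ → ℝ} {a b : ℝ} (hab : a ≤ b)
    (hf : ∀ x ∈ uIcc a b, DifferentiableAt ℝ f x)
    (hf' : IntervalIntegrable (deriv f) volume a b) :
    f b - f a ≤ ∫ x in a..b, max (deriv f x) 0 :=
  calc f b - f a = ∫ x in a..b, deriv f x := (intervalIntegral.integral_deriv_eq_sub hf hf').symm
    _ ≤ ∫ x in a..b, max (deriv f x) 0 :=
      intervalIntegral.integral_mono_on hab hf' ⟨hf'.1.pos_part, hf'.2.pos_part⟩
        fun _ _ ↦ le_max_left _ _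

theorem exists_forall_intervalIntegral_lt_of_nonneg_of_bounded {g : ℝ → ℝ} {M ε : ℝ}
    (hg : ∀ x, 0 ≤ g x) (hint : ∀ a b, IntervalIntegrable g volume a b)
    (hM : ∀ T, 0 ≤ T → ∫ x in 0..T, g x ≤ M) (hε : 0 < ε) :
    ∃ T, ∀ t s, T ≤ t → T ≤ s → ∫ x in t..s, g x < ε := by
  have hIoi : IntegrableOn g (Ioi 0) := by
    refine integrableOn_Ioi_of_intervalIntegral_norm_bounded M 0 (fun T ↦ (hint 0 T).1)
      tendsto_id ?_
    filter_upwards [eventually_ge_atTop 0] with T hT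
    simpa only [Real.norm_of_nonneg (hg _)] using hM T hT
  obtain ⟨T, hT⟩ := Metric.cauchySeq_iff.1
    (intervalIntegral_tendsto_integral_Ioi 0 hIoi tendsto_id).cauchySeq ε hε
  refine ⟨T, fun t s ht hs ↦ ?_⟩
  have := hT s hs t ht
  rw [id, id, Real.dist_eq, intervalIntegral.integral_interval_sub_left (hint 0 s) (hint 0 t)]
    at this
  exact (le_abs_self _).trans_lt this

theorem tendsto_zero_of_frequently_le_of_increase_le {α : Type*} [Preorder α]
    {ℓ : α → ℝ} (hnn : ∀ t, 0 ≤ ℓ t)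
    (hinc : ∀ ε > 0, ∃ T, ∀ t s, T ≤ t → t ≤ s → ℓ s ≤ ℓ t + ε)
    (hsmall : ∀ ε > 0, ∃ᶠ t in atTop, ℓ t ≤ ε) :
    Tendsto ℓ atTop (𝓝 0) := by
  refine Metric.tendsto_nhds.2 fun ε hε ↦ ?_
  obtain ⟨T, hT⟩ := hinc (ε / 2) (half_pos hε)
  obtain ⟨t, ht, hTt⟩ :=
    ((hsmall (ε / 4) (by positivity)).and_eventually (mem_atTop T)).exists
  filter_upwards [mem_atTop t] with s hs
  have := hT t s hTt hs
  rw [Real.dist_0_eq_abs, abs_of_nonneg (hnn s)]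
  linarith

/-- If `ℓ : ℝ → ℝ` is continuously differentiable, nonnegative,
its total increase `∫₀ᵀ (dℓ/dt)𝟙[dℓ/dt ≥ 0] dt` is bounded by a finite `M` for
all `T ≥ 0`, and for every `ε > 0` and `T ≥ 0` there is `t ≥ T` with
`ℓ(t) ≤ ε`, then `ℓ(t) → 0` as `t → ∞`. -/
theorem stmt16 (ℓ : ℝ → ℝ) (M : ℝ)
    (hC1 : ContDiff ℝ 1 ℓ)
    (hnn : ∀ t : ℝ, 0 ≤ ℓ t)
    (hM : ∀ T : ℝ, 0 ≤ T →
      (∫ t in (0:ℝ)..T, deriv ℓ t * (if 0 ≤ deriv ℓ t then 1 else 0)) ≤ M)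
    (hsmall : ∀ ε : ℝ, 0 < ε → ∀ T : ℝ, 0 ≤ T → ∃ t, T ≤ t ∧ ℓ t ≤ ε) :
    Filter.Tendsto ℓ Filter.atTop (nhds 0) := by
  have hderiv : Continuous (deriv ℓ) := hC1.continuous_deriv le_rfl
  have hpos_eq : (fun t ↦ deriv ℓ t * (if 0 ≤ deriv ℓ t then 1 else 0)) =
      fun t ↦ max (deriv ℓ t) 0 := by
    ext t
    split_ifs with h
    · rw [mul_one, max_eq_left h]
    · rw [mul_zero, max_eq_right (not_le.1 h).le]
  rw [hpos_eq] at hM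
  refine tendsto_zero_of_frequently_le_of_increase_le hnn (fun ε hε ↦ ?_) fun ε hε ↦ ?_
  · obtain ⟨T, hT⟩ := exists_forall_intervalIntegral_lt_of_nonneg_of_bounded
      (fun _ ↦ le_max_right _ 0) (fun a b ↦ (hderiv.max continuous_const).intervalIntegrable a b)
      hM hε
    refine ⟨T, fun t s ht hts ↦ ?_⟩
    have := sub_le_integral_max_deriv_zero hts
      (fun x _ ↦ (hC1.differentiable one_ne_zero).differentiableAt)
      (hderiv.intervalIntegrable t s)
    linarith [hT t s ht (ht.trans hts)]
  · refine frequently_atTop.2 fun T ↦ ?_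
    obtain ⟨t, hTt, ht⟩ := hsmall ε hε (max T 0) (le_max_right T 0)
    exact ⟨t, (le_max_left T 0).trans hTt, ht⟩
end

section
/- In one dimension (m = 1) under FA* dynamics, the loss derivative satisfies d‖(y−ŷ)cᵀ‖_F²/dt = −2‖y − ŷ‖²‖c‖²(cᵀw). In particular, the loss is strictly decreasing whenever cᵀw > 0 and y ≠ ŷ. -/
/-!
The fitted vector `ŷ = Z w` is the least-squares fit of `y` on the columns of `Z`, so the
residual `e = y - ŷ` satisfies the normal equations `Zᵀ e = 0`. Differentiating `ŷ = Z w` gives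
`ŷ' = Z' w + Z w' = (c ⬝ᵥ w) e + Z w'`, and the term `e ⬝ᵥ Z w'` vanishes by orthogonality whatever
`w'` is, so `(e ⬝ᵥ e)' = -2 (e ⬝ᵥ e) (c ⬝ᵥ w)`. The only analytic input is that `w` is
differentiable, which follows from the adjugate formula for `(ZᵀZ)⁻¹`.
-/

open Matrix

noncomputable def Matrix.leastSquares {m n R : Type*} [Fintype m] [Fintype n] [DecidableEq n]
    [CommRing R] (A : Matrix m n R) (y : m → R) : n → R :=
  (Aᵀ * A)⁻¹ *ᵥ (Aᵀ *ᵥ y)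

section LeastSquares

variable {m n R : Type*} [Fintype m] [Fintype n] [DecidableEq n] [CommRing R] {A : Matrix m n R}

theorem Matrix.transpose_mulVec_sub_mulVec_leastSquares (hA : IsUnit (Aᵀ * A)) (y : m → R) :
    Aᵀ *ᵥ (y - A *ᵥ A.leastSquares y) = 0 := by
  rw [leastSquares, mulVec_sub, mulVec_mulVec, mulVec_mulVec,
    mul_nonsing_inv _ ((isUnit_iff_isUnit_det _).mp hA), one_mulVec, sub_self]

theorem Matrix.sub_mulVec_leastSquares_dotProduct_mulVec (hA : IsUnit (Aᵀ * A)) (y : m → R)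
    (v : n → R) : (y - A *ᵥ A.leastSquares y) ⬝ᵥ A *ᵥ v = 0 := by
  rw [dotProduct_mulVec, ← mulVec_transpose, transpose_mulVec_sub_mulVec_leastSquares hA,
    zero_dotProduct]

end LeastSquares

section Differentiability

variable {𝕜 E : Type*} [NontriviallyNormedField 𝕜] [NormedAddCommGroup E] [NormedSpace 𝕜 E]
  {x : E}

theorem Matrix.differentiableAt_det {ι : Type*} [Fintype ι] [DecidableEq ι] {M : E → Matrix ι ι 𝕜}
    (hM : ∀ i j, DifferentiableAt 𝕜 (fun x => M x i j) x) :
    DifferentiableAt 𝕜 (fun x => (M x).det) x := by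
  simp only [det_apply']
  fun_prop

theorem Matrix.differentiableAt_inv_apply {ι : Type*} [Fintype ι] [DecidableEq ι]
    {M : E → Matrix ι ι 𝕜} (hM : ∀ i j, DifferentiableAt 𝕜 (fun x => M x i j) x)
    (hunit : IsUnit (M x)) (i j : ι) : DifferentiableAt 𝕜 (fun x => (M x)⁻¹ i j) x := by
  simp only [inv_def, smul_apply, smul_eq_mul, Ring.inverse_eq_inv', adjugate_apply]
  refine (differentiableAt_det hM).inv ((isUnit_iff_isUnit_det _).mp hunit).ne_zero |>.mul
    (differentiableAt_det fun k l => ?_)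
  by_cases hk : k = j
  · subst hk
    simp
  · simpa [updateRow_ne hk] using hM k l

theorem Matrix.differentiableAt_leastSquares {m n : Type*} [Fintype m] [Fintype n] [DecidableEq n]
    {A : E → Matrix m n 𝕜} (hA : ∀ i j, DifferentiableAt 𝕜 (fun x => A x i j) x)
    (hunit : IsUnit ((A x)ᵀ * A x)) (y : m → 𝕜) :
    DifferentiableAt 𝕜 (fun x => (A x).leastSquares y) x := by
  have hgram : ∀ j k, DifferentiableAt 𝕜 (fun x => ((A x)ᵀ * A x) j k) x := by
    intro j k
    simp only [mul_apply, transpose_apply]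
    exact DifferentiableAt.fun_sum fun i _ => (hA i j).mul (hA i k)
  have hinv := differentiableAt_inv_apply hgram hunit
  refine differentiableAt_pi.2 fun j => ?_
  simp only [leastSquares, mulVec, _root_.dotProduct, transpose_apply]
  exact DifferentiableAt.fun_sum fun k _ => (hinv j k).mul
    (DifferentiableAt.fun_sum fun i _ => (hA i k).mul_const _)

end Differentiability

section Derivatives

variable {𝕜 : Type*} [NontriviallyNormedField 𝕜] {ι κ : Type*} [Fintype ι] {t : 𝕜}

theorem HasDerivAt.dotProduct {u v : 𝕜 → ι → 𝕜} {u' v' : ι → 𝕜} (hu : HasDerivAt u u' t)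
    (hv : HasDerivAt v v' t) :
    HasDerivAt (fun s => u s ⬝ᵥ v s) (u' ⬝ᵥ v t + u t ⬝ᵥ v') t := by
  simp only [_root_.dotProduct, ← Finset.sum_add_distrib]
  exact HasDerivAt.fun_sum (u := Finset.univ) fun i _ =>
    (hasDerivAt_pi.1 hu i).fun_mul (hasDerivAt_pi.1 hv i)

theorem HasDerivAt.mulVec {A : 𝕜 → Matrix κ ι 𝕜} {A' : Matrix κ ι 𝕜} {v : 𝕜 → ι → 𝕜}
    {v' : ι → 𝕜} (hA : ∀ i j, HasDerivAt (fun s => A s i j) (A' i j) t)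
    (hv : HasDerivAt v v' t) :
    HasDerivAt (fun s => A s *ᵥ v s) (A' *ᵥ v t + A t *ᵥ v') t :=
  hasDerivAt_pi.2 fun i => (hasDerivAt_pi.2 (hA i)).dotProduct hv

end Derivatives

/-- (m = 1 case.) Under FA* dynamics `dZ/dt = (y−ŷ)cᵀ` with
`w = (ZᵀZ)⁻¹Zᵀy`, `ŷ = Zw`, the loss `ℓ = ‖(y−ŷ)cᵀ‖_F² = ‖y−ŷ‖²‖c‖²` satisfies
`dℓ/dt = −2‖y − ŷ‖²‖c‖²(cᵀw)`; in particular the loss derivative is strictly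
negative whenever `cᵀw > 0` and `y ≠ ŷ`. -/
theorem stmt18 (n r : ℕ)
    (y : Fin n → ℝ) (c : Fin r → ℝ)
    (Z : ℝ → Matrix (Fin n) (Fin r) ℝ)
    (hZ : ∀ t : ℝ, IsUnit ((Z t)ᵀ * Z t))
    (w : ℝ → (Fin r → ℝ))
    (hw : ∀ t, w t = ((Z t)ᵀ * Z t)⁻¹ *ᵥ ((Z t)ᵀ *ᵥ y))
    (yhat : ℝ → (Fin n → ℝ)) (hyhat : ∀ t, yhat t = Z t *ᵥ w t)
    (hdyn : ∀ t : ℝ, ∀ i j, HasDerivAt (fun s => Z s i j)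
      ((y - yhat t) i * c j) t)
    (ℓ : ℝ → ℝ)
    (hℓ : ∀ t, ℓ t = ((y - yhat t) ⬝ᵥ (y - yhat t)) * (c ⬝ᵥ c)) :
    (∀ t : ℝ, HasDerivAt ℓ
      (-2 * ((y - yhat t) ⬝ᵥ (y - yhat t)) * (c ⬝ᵥ c) * (c ⬝ᵥ w t)) t) ∧
    (∀ t : ℝ, 0 < c ⬝ᵥ w t → y ≠ yhat t → deriv ℓ t < 0) := by
  have hderiv : ∀ t, HasDerivAt ℓ
      (-2 * ((y - yhat t) ⬝ᵥ (y - yhat t)) * (c ⬝ᵥ c) * (c ⬝ᵥ w t)) t := by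
    intro t
    obtain ⟨w', hw'⟩ : ∃ w', HasDerivAt w w' t := by
      rw [funext hw]
      exact ⟨_, (differentiableAt_leastSquares (fun i j => (hdyn t i j).differentiableAt)
        (hZ t) y).hasDerivAt⟩
    have hyhat' : HasDerivAt yhat ((c ⬝ᵥ w t) • (y - yhat t) + Z t *ᵥ w') t := by
      have h := HasDerivAt.mulVec (A' := vecMulVec (y - yhat t) c) (hdyn t) hw'
      rwa [vecMulVec_mulVec, op_smul_eq_smul, ← funext hyhat] at h
    have horth : (y - yhat t) ⬝ᵥ Z t *ᵥ w' = 0 := by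
      rw [hyhat t, hw t]
      exact sub_mulVec_leastSquares_dotProduct_mulVec (hZ t) y w'
    have hres := hyhat'.const_sub y
    rw [funext hℓ]
    refine ((hres.dotProduct hres).mul_const (c ⬝ᵥ c)).congr_deriv ?_
    simp only [dotProduct_neg, dotProduct_add, dotProduct_smul, dotProduct_comm _ (y - yhat t),
      horth]
    ring
  refine ⟨hderiv, fun t hcw hne => ?_⟩
  have hres_pos : 0 < (y - yhat t) ⬝ᵥ (y - yhat t) := by
    simpa using dotProduct_star_self_pos_iff.2 (sub_ne_zero.2 hne)
  have hc_pos : 0 < c ⬝ᵥ c := by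
    have hc : c ≠ 0 := by
      rintro rfl
      simp at hcw
    simpa using dotProduct_star_self_pos_iff.2 hc
  rw [(hderiv t).deriv]
  nlinarith [mul_pos (mul_pos hres_pos hc_pos) hcw]
end
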